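/- Let π be dominant, w ≤_L π, and P ∈ PD(w). Then every crossing tile p ∈ P is π-dominated: row(p) ≤ λ'_{π(w⁻¹(s_p))}, where s_p is the pipe exiting p to the south. That is, P(cross) ⊆ P(π). -/

import Mathlib

open Equiv MvPolynomial

/-- A permutation of ℕ has finite support. -/
def FinSupp (w : Equiv.Perm ℕ) : Prop := {i | w i ≠ i}.Finite

/-- Inversion set Inv(w) = {(i,j) : i < j, w i > w j}. -/
def invSet (w : Equiv.Perm ℕ) : Set (ℕ × ℕ) := {p | p.1 < p.2 ∧ w p.2 < w p.1}

/-- Co-inversion set coInv(w) = {(i,j) : i < j, w i < w j}. -/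
def coinvSet (w : Equiv.Perm ℕ) : Set (ℕ × ℕ) := {p | p.1 < p.2 ∧ w p.1 < w p.2}

/-- Coxeter length ℓ(w) = |Inv(w)|. -/
noncomputable def len (w : Equiv.Perm ℕ) : ℕ := (invSet w).ncard

/-- Cover relation of left weak order: u = s_k * w with ℓ(u) = ℓ(w) + 1. -/
def WeakCover (w u : Equiv.Perm ℕ) : Prop :=
  ∃ k, u = Equiv.swap k (k + 1) * w ∧ len u = len w + 1

/-- Left weak order: reflexive-transitive closure of weak covers. -/
def leL (w u : Equiv.Perm ℕ) : Prop := Relation.ReflTransGen WeakCover w u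

/-- π avoids the pattern 132 (π is dominant). -/
def Avoids132 (π : Equiv.Perm ℕ) : Prop :=
  ¬ ∃ a b c : ℕ, a < b ∧ b < c ∧ π a < π c ∧ π c < π b

/-- Rothe diagram D(π) (0-indexed conventions). -/
def Rothe (π : Equiv.Perm ℕ) : Set (ℕ × ℕ) := {p | p.1 < π⁻¹ p.2 ∧ p.2 < π p.1}

/-- Young diagram of a partition (0-indexed): row i has l i cells. -/
def yd (l : ℕ → ℕ) : Set (ℕ × ℕ) := {p | p.2 < l p.1}

/-- Conjugate partition (0-indexed): column j has |{i : l i > j}| cells. -/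
noncomputable def conjPart (l : ℕ → ℕ) (j : ℕ) : ℕ := {i | j < l i}.ncard

/-- A pipe dream: a finite set of crossing tiles together with the (uniquely
determined) labels of the pipes on the four edges of each tile.  At a cross
tile the pipes pass straight through; at a bump tile the pipe from the north
exits west and the pipe from the east exits south.  Pipe j enters the quadrant
at the north edge of column j. -/
structure PipeDream where
  cross : Finset (ℕ × ℕ)
  north : ℕ × ℕ → ℕ
  east : ℕ × ℕ → ℕ
  south : ℕ × ℕ → ℕ
  west : ℕ × ℕ → ℕ
  north_top : ∀ j, north (0, j) = j
  north_succ : ∀ i j, north (i + 1, j) = south (i, j)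
  east_eq : ∀ i j, east (i, j) = west (i, j + 1)
  south_cross : ∀ p ∈ cross, south p = north p
  west_cross : ∀ p ∈ cross, west p = east p
  south_bump : ∀ p, p ∉ cross → south p = east p
  west_bump : ∀ p, p ∉ cross → west p = north p

namespace PipeDream

/-- Pipes a and b cross at position p. -/
def CrossAt (P : PipeDream) (a b : ℕ) (p : ℕ × ℕ) : Prop :=
  p ∈ P.cross ∧ ({P.north p, P.east p} : Set ℕ) = {a, b}

/-- A pipe dream is reduced if no two pipes cross more than once. -/
def Reduced (P : PipeDream) : Prop :=
  ∀ a b p q, P.CrossAt a b p → P.CrossAt a b q → p = q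

/-- P is a pipe dream for the permutation w: pipe a exits on the west edge at
row w⁻¹(a), i.e. the one-line notation read along the west edge is w. -/
def IsFor (P : PipeDream) (w : Equiv.Perm ℕ) : Prop := ∀ i, P.west (i, 0) = w i

/-- Pipe k passes through the tile p. -/
def OnPipe (P : PipeDream) (k : ℕ) (p : ℕ × ℕ) : Prop := P.north p = k ∨ P.east p = k

/-- p lies weakly northwest of pipe k. -/
def NWOfPipe (P : PipeDream) (k : ℕ) (p : ℕ × ℕ) : Prop :=
  ∃ q, P.OnPipe k q ∧ p.1 ≤ q.1 ∧ p.2 ≤ q.2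

end PipeDream

/-- The set of reduced pipe dreams for w. -/
def PD (w : Equiv.Perm ℕ) : Set PipeDream := {P | P.Reduced ∧ P.IsFor w}

/-- The set of π-dominated positions of a pipe dream P ∈ PD(w), where π is the
dominant permutation with Rothe diagram the Young diagram of l:
row(p) < λ'(π(w⁻¹(s_p))) (0-indexed), s_p being the pipe exiting p south. -/
noncomputable def dominated (π : Equiv.Perm ℕ) (l : ℕ → ℕ) (w : Equiv.Perm ℕ)
    (P : PipeDream) : Set (ℕ × ℕ) :=
  {p | p.1 < conjPart l (π (w⁻¹ (P.south p)))}

/-- The Schubert polynomial as the pipe dream generating function. -/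
noncomputable def Schub (w : Equiv.Perm ℕ) : MvPolynomial ℕ ℤ :=
  ∑ᶠ P ∈ PD w, ∏ p ∈ P.cross, X p.1

/-- The polynomial ring ℤ[x;y]: x-variables are `Sum.inl i`, y-variables `Sum.inr i`. -/
abbrev PolyXY := MvPolynomial (ℕ ⊕ ℕ) ℤ

/-- The field of rational functions in the x- and y-variables. -/
noncomputable abbrev RatXY := FractionRing PolyXY

noncomputable def Xv (i : ℕ) : RatXY := algebraMap PolyXY RatXY (X (Sum.inl i))
noncomputable def Yv (i : ℕ) : RatXY := algebraMap PolyXY RatXY (X (Sum.inr i))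

/-- The π-padded Schubert polynomial 𝔖_w^π(x;y) = y^λ · 𝔖_w(x₁/y₁, x₂/y₂, …),
viewed in the field of rational functions. -/
noncomputable def padded (l : ℕ → ℕ) (w : Equiv.Perm ℕ) : RatXY :=
  (∏ᶠ i, Yv i ^ l i) * (aeval (fun i => Xv i / Yv i) (Schub w))

/-- Δ = Σ_i x_i ∂/∂y_i. -/
noncomputable def deltaOp (f : PolyXY) : PolyXY :=
  ∑ᶠ i : ℕ, X (Sum.inl i) * pderiv (Sum.inr i) f

/-- ∇ = Σ_i y_i ∂/∂x_i. -/
noncomputable def nablaOp (f : PolyXY) : PolyXY :=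
  ∑ᶠ i : ℕ, X (Sum.inr i) * pderiv (Sum.inl i) f

/-! At a crossing tile `p` the pipe `k` leaving south and the pipe `a` leaving west cross there
and, `P` being reduced, nowhere else. Two pipes keep their relative order from the top edge
(pipe `j` enters at column `j`) down to the west edge (pipe `a` leaves at row `w⁻¹ a`) except
where they cross. Following `k` and `a` up from row `p.1` gives `k < a`, following them down
gives `w⁻¹ a < w⁻¹ k`, and `a` leaves at a row `w⁻¹ a ≥ p.1`. So `(w⁻¹ a, w⁻¹ k)` is an inversion
of `w`, hence of `π`, i.e. `(w⁻¹ a, π (w⁻¹ k))` lies in the Rothe diagram of `π`, the Young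
diagram of `λ`. Its column `π (w⁻¹ k)` then contains the rows `0, …, w⁻¹ a`, so
`p.1 ≤ w⁻¹ a < λ'_{π (w⁻¹ k)}`. -/

lemma swap_succ_lt_swap_succ {k x y : ℕ} (hxy : x < y) (h : ¬(x = k ∧ y = k + 1)) :
    swap k (k + 1) x < swap k (k + 1) y := by
  simp only [swap_apply_def]
  split_ifs <;> omega

lemma mem_invSet_swap_mul {w : Perm ℕ} {k i j : ℕ} (h : (i, j) ∈ invSet w)
    (hne : ¬(w j = k ∧ w i = k + 1)) : (i, j) ∈ invSet (swap k (k + 1) * w) :=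
  ⟨h.1, swap_succ_lt_swap_succ h.2 hne⟩

lemma invSet_subset_invSet_swap_mul {w : Perm ℕ} {k : ℕ} (h : w⁻¹ k < w⁻¹ (k + 1)) :
    invSet w ⊆ invSet (swap k (k + 1) * w) := by
  rintro ⟨i, j⟩ hij
  refine mem_invSet_swap_mul hij fun ⟨hj, hi⟩ => ?_
  rw [← hi, ← hj] at h
  simp only [Perm.coe_inv, symm_apply_apply] at h
  exact lt_asymm h hij.1

lemma invSet_subset_of_weakCover {w u : Perm ℕ} (h : WeakCover w u) : invSet w ⊆ invSet u := by
  obtain ⟨k, rfl, hlen⟩ := h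
  rcases lt_or_gt_of_ne (w⁻¹.injective.ne (Nat.succ_ne_self k).symm) with hk | hk
  · exact invSet_subset_invSet_swap_mul hk
  · -- here the swap removes exactly the inversion `q`, so it cannot increase the length
    exfalso
    set u := swap k (k + 1) * w
    set q := (w⁻¹ (k + 1), w⁻¹ k)
    have hwu : swap k (k + 1) * u = w := by simp [u, ← mul_assoc]
    have hu : u⁻¹ k < u⁻¹ (k + 1) := by simpa [u] using hk
    have hq : q ∉ invSet u := fun h => by simpa [u, q] using h.2
    have hset : invSet u = invSet w \ {q} := by
      refine subset_antisymm (fun p hp => ⟨hwu ▸ invSet_subset_invSet_swap_mul hu hp,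
        fun hpq => hq (hpq ▸ hp)⟩) ?_
      rintro ⟨i, j⟩ ⟨hij, hne⟩
      refine mem_invSet_swap_mul hij fun ⟨hj, hi⟩ => hne (Prod.ext ?_ ?_)
      · exact Perm.eq_inv_iff_eq.mpr hi
      · exact Perm.eq_inv_iff_eq.mpr hj
    have := Set.ncard_sdiff_singleton_le (invSet w) q
    simp only [len, hset] at hlen
    omega

lemma invSet_subset_of_leL {w u : Perm ℕ} (h : leL w u) : invSet w ⊆ invSet u := by
  induction h with
  | refl => exact subset_rfl
  | tail _ hc ih => exact ih.trans (invSet_subset_of_weakCover hc)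

lemma lt_conjPart_of_mem_yd {l : ℕ → ℕ} (hl : Antitone l) (hsupp : (Function.support l).Finite)
    {r c : ℕ} (h : (r, c) ∈ yd l) : r < conjPart l c := by
  have hsub : Set.Iic r ⊆ {i | c < l i} := fun i hi => lt_of_lt_of_le h (hl hi)
  have hfin : {i | c < l i}.Finite := hsupp.subset fun i hi => (Nat.zero_lt_of_lt hi).ne'
  calc r < (Set.Iic r).ncard := by rw [Set.ncard_Iic_nat]; exact r.lt_succ_self
    _ ≤ conjPart l c := Set.ncard_le_ncard hsub hfin

lemma mem_rothe_of_mem_invSet {π : Perm ℕ} {i j : ℕ} (h : (i, j) ∈ invSet π) :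
    (i, π j) ∈ Rothe π :=
  ⟨by simpa using h.1, h.2⟩

namespace PipeDream

variable (P : PipeDream)

lemma crossAt_comm {a b : ℕ} {p : ℕ × ℕ} : P.CrossAt a b p ↔ P.CrossAt b a p := by
  simp only [CrossAt, Set.pair_comm a b]

lemma crossAt_north_east {p : ℕ × ℕ} (hp : p ∈ P.cross) : P.CrossAt (P.north p) (P.east p) p :=
  ⟨hp, rfl⟩

noncomputable def rowBound : ℕ := P.cross.sup Prod.fst + 1

noncomputable def colBound : ℕ := P.cross.sup Prod.snd + 1

lemma notMem_cross_of_rowBound_le {p : ℕ × ℕ} (h : P.rowBound ≤ p.1) : p ∉ P.cross :=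
  fun hp => by have := Finset.le_sup (f := Prod.fst) hp; unfold rowBound at h; omega

lemma notMem_cross_of_colBound_le {p : ℕ × ℕ} (h : P.colBound ≤ p.2) : p ∉ P.cross :=
  fun hp => by have := Finset.le_sup (f := Prod.snd) hp; unfold colBound at h; omega

lemma exists_bump_ge (i j : ℕ) : ∃ t, j ≤ t ∧ (i, t) ∉ P.cross :=
  ⟨max j P.colBound, le_max_left _ _, P.notMem_cross_of_colBound_le (le_max_right _ _)⟩

noncomputable def nextBump (i j : ℕ) : ℕ := Nat.find (P.exists_bump_ge i j)

lemma le_nextBump (i j : ℕ) : j ≤ P.nextBump i j := (Nat.find_spec (P.exists_bump_ge i j)).1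

lemma nextBump_notMem (i j : ℕ) : (i, P.nextBump i j) ∉ P.cross :=
  (Nat.find_spec (P.exists_bump_ge i j)).2

lemma mem_cross_of_lt_nextBump {i j t : ℕ} (hj : j ≤ t) (ht : t < P.nextBump i j) :
    (i, t) ∈ P.cross := by
  by_contra hc
  exact Nat.find_min (P.exists_bump_ge i j) ht ⟨hj, hc⟩

lemma nextBump_le {i j t : ℕ} (hj : j ≤ t) (ht : (i, t) ∉ P.cross) : P.nextBump i j ≤ t :=
  Nat.find_min' _ ⟨hj, ht⟩

lemma nextBump_eq {i j t : ℕ} (hj : j ≤ t) (ht : (i, t) ∉ P.cross)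
    (hcross : ∀ s, j ≤ s → s < t → (i, s) ∈ P.cross) : P.nextBump i j = t := by
  refine le_antisymm (P.nextBump_le hj ht) (not_lt.mp fun hlt => ?_)
  exact P.nextBump_notMem i j (hcross _ (P.le_nextBump i j) hlt)

lemma nextBump_eq_of_le {i j j' : ℕ} (hj : j ≤ j') (hj' : j' ≤ P.nextBump i j) :
    P.nextBump i j' = P.nextBump i j :=
  P.nextBump_eq hj' (P.nextBump_notMem i j) fun _ hs hlt =>
    P.mem_cross_of_lt_nextBump (hj.trans hs) hlt

lemma exists_last_bump {i j : ℕ} (h : ∃ s < j, (i, s) ∉ P.cross) :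
    ∃ o < j, (i, o) ∉ P.cross ∧ ∀ s, o < s → s < j → (i, s) ∈ P.cross := by
  obtain ⟨s, hsj, hs⟩ := h
  let Q : ℕ → Prop := fun s => (i, s) ∉ P.cross
  refine ⟨Nat.findGreatest Q (j - 1), ?_,
    Nat.findGreatest_spec (P := Q) (m := s) (by omega) hs, ?_⟩
  · have := Nat.findGreatest_le (P := Q) (j - 1); omega
  · intro t hot htj
    by_contra hc
    exact Nat.findGreatest_is_greatest hot (by omega) hc

lemma north_eq_of_forall_mem_cross {i r j : ℕ} (hir : i ≤ r)
    (hcross : ∀ s, i ≤ s → s < r → (s, j) ∈ P.cross) : P.north (r, j) = P.north (i, j) := by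
  induction r, hir using Nat.le_induction with
  | base => rfl
  | succ r hir ih =>
    rw [P.north_succ, P.south_cross _ (hcross r hir r.lt_succ_self),
      ih fun s hs hsr => hcross s hs (Nat.lt_succ_of_lt hsr)]

lemma west_eq_of_forall_mem_cross {i j t : ℕ} (hjt : j ≤ t)
    (hcross : ∀ s, j ≤ s → s < t → (i, s) ∈ P.cross) : P.west (i, t) = P.west (i, j) := by
  induction t, hjt using Nat.le_induction with
  | base => rfl
  | succ t hjt ih =>
    rw [← P.east_eq, ← P.west_cross _ (hcross t hjt t.lt_succ_self),
      ih fun s hs hst => hcross s hs (Nat.lt_succ_of_lt hst)]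

lemma west_eq_north_nextBump (i j : ℕ) : P.west (i, j) = P.north (i, P.nextBump i j) := by
  rw [← P.west_bump _ (P.nextBump_notMem i j),
    P.west_eq_of_forall_mem_cross (P.le_nextBump i j) fun _ => P.mem_cross_of_lt_nextBump]

lemma north_succ_eq_west_of_last_bump {i o j : ℕ} (ho : (i, o) ∉ P.cross) (hoj : o < j)
    (hcross : ∀ s, o < s → s < j → (i, s) ∈ P.cross) : P.north (i + 1, o) = P.west (i, j) := by
  rw [P.north_succ, P.south_bump _ ho, P.east_eq,
    P.west_eq_of_forall_mem_cross hoj fun s hs => hcross s hs]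

lemma west_eq_west_zero_or_exists_north_succ (i j : ℕ) :
    P.west (i, j) = P.west (i, 0) ∨ ∃ o < j, P.north (i + 1, o) = P.west (i, j) := by
  by_cases h : ∃ s < j, (i, s) ∉ P.cross
  · obtain ⟨o, hoj, ho, hcross⟩ := P.exists_last_bump h
    exact Or.inr ⟨o, hoj, P.north_succ_eq_west_of_last_bump ho hoj hcross⟩
  · push Not at h
    exact Or.inl (P.west_eq_of_forall_mem_cross (Nat.zero_le j) fun s _ => h s)

/-- The column of row `i` whose northern pipe leaves the tile `(i, t)` to the south. -/
noncomputable def southSource (i t : ℕ) : ℕ := if (i, t) ∈ P.cross then t else P.nextBump i (t + 1)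

lemma north_succ_eq_north_southSource (i t : ℕ) :
    P.north (i + 1, t) = P.north (i, P.southSource i t) := by
  unfold southSource
  split_ifs with h
  · rw [P.north_succ, P.south_cross _ h]
  · rw [P.north_succ, P.south_bump _ h, P.east_eq, P.west_eq_north_nextBump]

/-- Two pipes leaving row `i` southwards swap their order only where they cross in that row. -/
lemma southSource_lt_southSource {i t t' : ℕ} (htt : t < t')
    (h : ¬ P.CrossAt (P.north (i + 1, t)) (P.north (i + 1, t')) (i, t')) :
    P.southSource i t < P.southSource i t' := by
  have hnb := P.le_nextBump i (t' + 1)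
  by_cases hc : (i, t) ∈ P.cross <;> by_cases hc' : (i, t') ∈ P.cross <;>
    simp only [southSource, hc, hc', if_true, if_false]
  · exact htt
  · omega
  · refine not_le.mp fun hle => h ⟨hc', ?_⟩
    have hlt : t' < P.nextBump i (t + 1) :=
      lt_of_le_of_ne hle fun heq => P.nextBump_notMem i (t + 1) (heq ▸ hc')
    rw [P.north_succ_eq_north_southSource i t, P.north_succ_eq_north_southSource i t',
      P.east_eq, P.west_eq_north_nextBump, P.nextBump_eq_of_le (by omega) hlt]
    simp only [southSource, hc, hc', if_true, if_false, Set.pair_comm]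
  · have := P.nextBump_le (by omega : t + 1 ≤ t') hc'
    omega

lemma exists_southSource_eq {i j : ℕ} (hj : j ≠ P.nextBump i 0) : ∃ o, P.southSource i o = j := by
  by_cases hc : (i, j) ∈ P.cross
  · exact ⟨j, if_pos hc⟩
  · have hlt : P.nextBump i 0 < j := lt_of_le_of_ne (P.nextBump_le (Nat.zero_le j) hc) hj.symm
    obtain ⟨o, hoj, ho, hcross⟩ :=
      P.exists_last_bump ⟨_, hlt, P.nextBump_notMem i 0⟩
    exact ⟨o, by rw [southSource, if_neg ho, P.nextBump_eq hoj hc fun s hs => hcross s hs]⟩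

lemma north_lt_north_of_not_crossAt {i j j' : ℕ} (hjj : j < j')
    (h : ∀ q : ℕ × ℕ, q.1 < i → ¬ P.CrossAt (P.north (i, j)) (P.north (i, j')) q) :
    P.north (i, j) < P.north (i, j') := by
  induction i generalizing j j' with
  | zero => rwa [P.north_top, P.north_top]
  | succ i ih =>
    have hss := P.southSource_lt_southSource hjj (h (i, j') i.lt_succ_self)
    rw [P.north_succ_eq_north_southSource i j, P.north_succ_eq_north_southSource i j'] at h ⊢
    exact ih hss fun q hq => h q (Nat.lt_succ_of_lt hq)

lemma inv_west_zero {w : Perm ℕ} (hw : P.IsFor w) (i : ℕ) : w⁻¹ (P.west (i, 0)) = i := by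
  rw [hw i, Perm.inv_eq_iff_eq]

lemma north_eq_of_rowBound_le {w : Perm ℕ} (hw : P.IsFor w) {i : ℕ} (hi : P.rowBound ≤ i)
    (j : ℕ) : P.north (i, j) = w (i + j) := by
  induction j generalizing i with
  | zero => rw [← P.west_bump _ (P.notMem_cross_of_rowBound_le hi), hw]; rfl
  | succ j ih =>
    rw [← P.west_bump _ (P.notMem_cross_of_rowBound_le hi), ← P.east_eq,
      ← P.south_bump _ (P.notMem_cross_of_rowBound_le hi), ← P.north_succ, ih (by omega)]
    congr 1; omega

lemma exists_west_eq_north (i j : ℕ) : ∃ r, i ≤ r ∧ P.west (r, j) = P.north (i, j) := by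
  have hex : ∃ r, i ≤ r ∧ (r, j) ∉ P.cross :=
    ⟨max i P.rowBound, le_max_left _ _, P.notMem_cross_of_rowBound_le (le_max_right _ _)⟩
  obtain ⟨hir, hr⟩ := Nat.find_spec hex
  refine ⟨Nat.find hex, hir, ?_⟩
  rw [P.west_bump _ hr, P.north_eq_of_forall_mem_cross hir fun s hs hsr =>
    not_not.mp fun hc => Nat.find_min hex hsr ⟨hs, hc⟩]

lemma exists_west_zero_eq_west (i j : ℕ) : ∃ r, i ≤ r ∧ P.west (r, 0) = P.west (i, j) := by
  induction j generalizing i with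
  | zero => exact ⟨i, le_rfl, rfl⟩
  | succ j ih =>
    by_cases hc : (i, j) ∈ P.cross
    · obtain ⟨r, hir, hr⟩ := ih i
      exact ⟨r, hir, by rw [hr, P.west_cross _ hc, P.east_eq]⟩
    · obtain ⟨r, hir, hr⟩ := P.exists_west_eq_north (i + 1) j
      obtain ⟨r', hrr, hr'⟩ := ih r
      refine ⟨r', by omega, ?_⟩
      rw [hr', hr, P.north_succ, P.south_bump _ hc, P.east_eq]

lemma le_inv_west {w : Perm ℕ} (hw : P.IsFor w) (i j : ℕ) : i ≤ w⁻¹ (P.west (i, j)) := by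
  obtain ⟨r, hir, hr⟩ := P.exists_west_zero_eq_west i j
  rwa [← hr, P.inv_west_zero hw]

lemma le_inv_north {w : Perm ℕ} (hw : P.IsFor w) (i j : ℕ) : i ≤ w⁻¹ (P.north (i, j)) := by
  obtain ⟨r, hir, hr⟩ := P.exists_west_eq_north i j
  exact hir.trans (hr ▸ P.le_inv_west hw r j)

lemma inv_north_lt_inv_north_of_not_crossAt {w : Perm ℕ} (hw : P.IsFor w) {i j j' : ℕ}
    (hjj : j < j')
    (h : ∀ q : ℕ × ℕ, i ≤ q.1 → ¬ P.CrossAt (P.north (i, j)) (P.north (i, j')) q) :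
    w⁻¹ (P.north (i, j)) < w⁻¹ (P.north (i, j')) := by
  obtain ⟨n, hn⟩ : ∃ n, P.rowBound ≤ i + n := ⟨P.rowBound, by omega⟩
  induction n generalizing i j j' with
  | zero =>
    simp only [P.north_eq_of_rowBound_le hw (by omega : P.rowBound ≤ i), Perm.coe_inv,
      symm_apply_apply]
    omega
  | succ n ih =>
    -- the pipe entering row `i` at column `nextBump i 0` leaves it westwards; every other pipe
    -- reappears in row `i + 1`, at a column `o` with `southSource i o` its column in row `i`
    have hj' : j' ≠ P.nextBump i 0 := by
      rintro rfl
      refine h (i, j) le_rfl ⟨P.mem_cross_of_lt_nextBump (Nat.zero_le j) hjj, ?_⟩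
      rw [P.east_eq, P.west_eq_north_nextBump, P.nextBump_eq_of_le (Nat.zero_le _) hjj]
    obtain ⟨o', rfl⟩ := P.exists_southSource_eq hj'
    rw [← P.north_succ_eq_north_southSource] at h ⊢
    by_cases hj : j = P.nextBump i 0
    · rw [hj, ← P.west_eq_north_nextBump, P.inv_west_zero hw]
      exact P.le_inv_north hw (i + 1) o'
    obtain ⟨o, rfl⟩ := P.exists_southSource_eq hj
    rw [← P.north_succ_eq_north_southSource] at h ⊢
    rcases lt_trichotomy o o' with hoo | rfl | hoo
    · exact ih hoo (fun q hq => h q (by omega)) (by omega)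
    · exact absurd hjj (lt_irrefl _)
    · refine absurd hjj (P.southSource_lt_southSource hoo fun hq => h (i, o) le_rfl ?_).not_gt
      exact P.crossAt_comm.mp hq

lemma north_lt_east_of_mem_cross (hred : P.Reduced) {p : ℕ × ℕ} (hp : p ∈ P.cross) :
    P.north p < P.east p := by
  obtain ⟨i, j⟩ := p
  rw [P.east_eq, P.west_eq_north_nextBump]
  refine P.north_lt_north_of_not_crossAt (P.le_nextBump i (j + 1)) fun q hq hcross => ?_
  rw [← P.west_eq_north_nextBump, ← P.east_eq] at hcross
  obtain rfl := hred _ _ _ _ hcross (P.crossAt_north_east hp)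
  exact lt_irrefl i hq

lemma inv_east_lt_inv_north_of_mem_cross (hred : P.Reduced) {w : Perm ℕ} (hw : P.IsFor w)
    {p : ℕ × ℕ} (hp : p ∈ P.cross) : w⁻¹ (P.east p) < w⁻¹ (P.north p) := by
  obtain ⟨i, j⟩ := p
  rw [← P.west_cross _ hp, ← P.south_cross _ hp, ← P.north_succ]
  rcases P.west_eq_west_zero_or_exists_north_succ i j with h0 | ⟨o, hoj, ho⟩
  · rw [h0, P.inv_west_zero hw]
    exact P.le_inv_north hw (i + 1) j
  · rw [← ho]
    refine P.inv_north_lt_inv_north_of_not_crossAt hw hoj fun q hq hcross => ?_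
    rw [ho, P.west_cross _ hp, P.north_succ, P.south_cross _ hp] at hcross
    obtain rfl := hred _ _ _ _ (P.crossAt_comm.mp hcross) (P.crossAt_north_east hp)
    exact i.not_succ_le_self hq

end PipeDream

theorem stmt10_general (π w : Equiv.Perm ℕ) (l : ℕ → ℕ)
    (hl : Antitone l) (hsupp : (Function.support l).Finite)
    (hD : Rothe π = yd l) (hw : leL w π)
    (P : PipeDream) (hP : P ∈ PD w) :
    ∀ p ∈ P.cross, p.1 < conjPart l (π (w⁻¹ (P.south p))) := by
  obtain ⟨hred, hPw⟩ := hP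
  intro p hp
  have hinv : (w⁻¹ (P.east p), w⁻¹ (P.north p)) ∈ invSet w :=
    ⟨P.inv_east_lt_inv_north_of_mem_cross hred hPw hp,
      by simpa using P.north_lt_east_of_mem_cross hred hp⟩
  have hyd : (w⁻¹ (P.east p), π (w⁻¹ (P.north p))) ∈ yd l :=
    hD ▸ mem_rothe_of_mem_invSet (invSet_subset_of_leL hw hinv)
  have hrow : p.1 ≤ w⁻¹ (P.east p) := P.west_cross p hp ▸ P.le_inv_west hPw p.1 p.2
  rw [P.south_cross p hp]
  exact hrow.trans_lt (lt_conjPart_of_mem_yd hl hsupp hyd)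

/-- every crossing tile of P ∈ PD(w) is π-dominated:
P(cross) ⊆ P(π). -/
theorem stmt10 (π w : Equiv.Perm ℕ) (l : ℕ → ℕ) (hπ : FinSupp π)
    (hdom : Avoids132 π) (hl : Antitone l) (hsupp : (Function.support l).Finite)
    (hD : Rothe π = yd l) (hw : leL w π)
    (P : PipeDream) (hP : P ∈ PD w) :
    ∀ p ∈ P.cross, p.1 < conjPart l (π (w⁻¹ (P.south p))) :=
  stmt10_general π w l hl hsupp hD hw P hP
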